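/- Fix integers 1 ≤ p < n. The map φ_ss is an isomorphism of posets from (Ĩ_ss, ≺_ss) to the set 𝒥(Q̃) of finite order ideals of (Q̃,≺) ordered by inclusion. -/

import Mathlib

/-
Relation (i) makes every row of a finite order ideal `S ⊆ Q̃` an initial segment
`j ≤ rowMax S i`, relation (ii) fills every row at least `p` below the top row, and relation (iii)
keeps the rows just below the top off the boundary `j = i + n - 1`, so that by (i) again the
offsets `max (rowMax S i) p - i` strictly decrease along the last `p` rows. Read from the top,
these offsets are a strictly increasing `α` with `φ_ss(I^{(k)}) = S`, where `k = topRow S - p`.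
Conversely, `φ_ss(I^{(k)}) ⊆ φ_ss(I'^{(k')})` can be tested on the top cell
`q_{k+p-a, k+p-a+α a}` of each row of the band, and this test is exactly `I^{(k)} ⪯_ss I'^{(k')}`;
injectivity is then the antisymmetry of `⪯_ss`.
-/

open scoped Classical

noncomputable section

open MvPolynomial

/-- The poset `Q̃`: elements `q_{i,j}` with `i ≥ 1`, `j ≥ p+1` and `j − i ∈ [0, n−1]`. -/
abbrev Qt (p n : ℕ) :=
  {x : ℕ × ℕ // 1 ≤ x.1 ∧ p + 1 ≤ x.2 ∧ x.1 ≤ x.2 ∧ x.2 + 1 ≤ x.1 + n}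

/-- The order relation of `Q̃` on raw pairs: `(i₁,j₁) ⪯ (i₂,j₂)` iff
(i) `i₁ ≤ i₂` and `j₁ ≤ j₂`, or (ii) `i₁ + p ≤ i₂`, or (iii) `j₁ + n − p ≤ j₂`. -/
def qleN (p n : ℕ) (a b : ℕ × ℕ) : Prop :=
  (a.1 ≤ b.1 ∧ a.2 ≤ b.2) ∨ a.1 + p ≤ b.1 ∨ a.2 + (n - p) ≤ b.2

/-- The order `⪯` on `Q̃`. -/
def qleT (p n : ℕ) (a b : Qt p n) : Prop := qleN p n a.val b.val

/-- The order ideal `φ_ss(I^{(k)}) ⊆ Q̃`: all `q_{i,j}` with `i ≤ k` and, for each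
`i ∈ [k+1, k+p]`, those `q_{i,j}` with `j ≤ i + α_{p+1−(i−k)} − 1`. -/
def phiSS (p n : ℕ) (α : Fin p → Fin n) (k : ℕ) : Set (Qt p n) :=
  {q | q.val.1 ≤ k ∨ ∃ t : Fin p, q.val.1 = k + 1 + (t : ℕ) ∧
    q.val.2 ≤ q.val.1 + (α ⟨p - 1 - (t : ℕ), by have := t.isLt; omega⟩ : ℕ)}

/-- The order `⪯_ss` on `Ĩ_ss`: `I^{(k)} ⪯_ss I'^{(k')}` iff `k ≤ k'` and
`α_i ≤ α'_{i'}` for all `i, i' ∈ [1,p]` with `i' − i = k' − k`. -/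
def ssLe (p n : ℕ) (α : Fin p → Fin n) (k : ℕ) (α' : Fin p → Fin n) (k' : ℕ) : Prop :=
  k ≤ k' ∧ ∀ a b : Fin p, (b : ℕ) + k = (a : ℕ) + k' → (α a : ℕ) ≤ (α' b : ℕ)

theorem Fin.val_add_sub_le_of_strictMono {m : ℕ} {f : Fin m → ℕ} (hf : StrictMono f)
    {a b : Fin m} (hab : a ≤ b) : f a + ((b : ℕ) - (a : ℕ)) ≤ f b := by
  obtain ⟨d, hd⟩ := Nat.exists_eq_add_of_le (Fin.le_def.mp hab)
  induction d generalizing b with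
  | zero => rw [Fin.ext (hd.trans (Nat.add_zero _))]; omega
  | succ d ih =>
    have hc := ih (b := ⟨a + d, by omega⟩) (Fin.le_def.mpr (by simp)) rfl
    have hcb : f ⟨a + d, by omega⟩ < f b := hf (Fin.lt_def.mpr (by simp; omega))
    simp only at hc
    omega

section StrictMonoFin

variable {p n : ℕ} {α : Fin p → Fin n}

theorem Fin.le_val_of_strictMono (hα : StrictMono α) (a : Fin p) : (a : ℕ) ≤ α a := by
  have := Fin.val_add_sub_le_of_strictMono (Fin.val_strictMono.comp hα)
    (Fin.le_def.mpr (Nat.zero_le a) : (⟨0, a.pos⟩ : Fin p) ≤ a)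
  simp only [Function.comp_apply] at this
  omega

theorem Fin.val_add_le_of_strictMono (hα : StrictMono α) (a : Fin p) :
    (α a : ℕ) + p ≤ n + a := by
  have ha := a.isLt
  have hlast := Fin.val_add_sub_le_of_strictMono (Fin.val_strictMono.comp hα)
    (Fin.le_def.mpr (by simp only; omega) : a ≤ ⟨p - 1, by omega⟩)
  have := (α ⟨p - 1, by omega⟩).isLt
  simp only [Function.comp_apply] at hlast
  omega

end StrictMonoFin

section PhiSS

variable {p n : ℕ} {α α' : Fin p → Fin n} {k k' : ℕ}

theorem mem_phiSS_iff {q : Qt p n} :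
    q ∈ phiSS p n α k ↔
      q.val.1 ≤ k ∨ ∃ s : Fin p, q.val.1 + s = k + p ∧ q.val.2 ≤ q.val.1 + α s := by
  simp only [phiSS, Set.mem_ofPred_eq]
  refine or_congr_right ⟨fun ⟨t, ht, hq⟩ => ⟨_, ?_, hq⟩, fun ⟨s, hs, hq⟩ => ?_⟩
  · have := t.isLt
    simp only
    omega
  · have := s.isLt
    refine ⟨⟨p - 1 - s, by omega⟩, by simp only; omega, ?_⟩
    simp only
    convert hq using 4
    simp only [Fin.ext_iff]
    omega

theorem fst_le_of_mem_phiSS {q : Qt p n} (hq : q ∈ phiSS p n α k) : q.val.1 ≤ k + p := by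
  rcases mem_phiSS_iff.mp hq with h | ⟨s, hs, -⟩ <;> omega

theorem snd_le_of_mem_phiSS (hα : StrictMono α) {q : Qt p n} (hq : q ∈ phiSS p n α k) :
    q.val.2 ≤ k + n := by
  have := q.property
  rcases mem_phiSS_iff.mp hq with h | ⟨s, hs, hq⟩
  · omega
  · have := Fin.val_add_le_of_strictMono hα s
    omega

theorem mem_phiSS_of_snd_le (hα : StrictMono α) {q : Qt p n} (hq : q.val.2 ≤ k + p) :
    q ∈ phiSS p n α k := by
  have := q.property
  refine mem_phiSS_iff.mpr (or_iff_not_imp_left.mpr fun hk => ?_)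
  obtain ⟨s, hs⟩ : ∃ s : Fin p, (s : ℕ) = k + p - q.val.1 := ⟨⟨_, by omega⟩, rfl⟩
  have := Fin.le_val_of_strictMono hα s
  exact ⟨s, by omega, by omega⟩

theorem finite_setOf_fst_le (m : ℕ) : {q : Qt p n | q.val.1 ≤ m}.Finite := by
  refine ((Set.finite_Iic m).prod (Set.finite_Iic (m + n))).preimage
    Subtype.val_injective.injOn |>.subset fun q hq => ?_
  have := q.property
  simp only [Set.mem_ofPred_eq] at hq
  simp only [Set.mem_preimage, Set.mem_prod, Set.mem_Iic]
  omega

theorem finite_phiSS : (phiSS p n α k).Finite :=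
  (finite_setOf_fst_le (k + p)).subset fun _ => fst_le_of_mem_phiSS

def IsOrderIdeal (S : Set (Qt p n)) : Prop := ∀ a ∈ S, ∀ b, qleT p n b a → b ∈ S

theorem isOrderIdeal_phiSS (hα : StrictMono α) : IsOrderIdeal (phiSS p n α k) := by
  intro a ha b hba
  have hfst := fst_le_of_mem_phiSS ha
  rcases hba with ⟨h1, h2⟩ | h | h
  · refine mem_phiSS_iff.mpr ?_
    rcases mem_phiSS_iff.mp ha with ha | ⟨s, hs, ha⟩
    · omega
    refine or_iff_not_imp_left.mpr fun hk => ?_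
    obtain ⟨s', hs'⟩ : ∃ s' : Fin p, (s' : ℕ) = k + p - b.val.1 := ⟨⟨_, by omega⟩, rfl⟩
    have := Fin.val_add_sub_le_of_strictMono (Fin.val_strictMono.comp hα)
      (Fin.le_def.mpr (by omega) : s ≤ s')
    simp only [Function.comp_apply] at this
    exact ⟨s', by omega, by omega⟩
  · exact mem_phiSS_iff.mpr (Or.inl (by omega))
  · have := snd_le_of_mem_phiSS hα ha
    exact mem_phiSS_of_snd_le hα (by omega)

theorem phiSS_subset_of_ssLe (h : ssLe p n α k α' k') : phiSS p n α k ⊆ phiSS p n α' k' := by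
  intro q hq
  obtain ⟨hk, hαα'⟩ := h
  refine mem_phiSS_iff.mpr (or_iff_not_imp_left.mpr fun hk' => ?_)
  obtain h | ⟨s, hs, hq⟩ := mem_phiSS_iff.mp hq
  · omega
  obtain ⟨s', hs'⟩ : ∃ s' : Fin p, (s' : ℕ) = k' + p - q.val.1 := ⟨⟨_, by omega⟩, rfl⟩
  have := hαα' s s' (by omega)
  exact ⟨s', by omega, by omega⟩

theorem le_of_phiSS_subset (hn : 0 < n) (hα : StrictMono α)
    (h : phiSS p n α k ⊆ phiSS p n α' k') : k ≤ k' := by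
  by_contra! hlt
  obtain ⟨q, hq₁, hq₂⟩ : ∃ q : Qt p n, q.val.1 = k + p ∧ q.val.2 = k + p :=
    ⟨⟨(k + p, k + p), by omega⟩, rfl, rfl⟩
  have := fst_le_of_mem_phiSS (h (mem_phiSS_of_snd_le hα hq₂.le))
  omega

theorem le_of_phiSS_subset_of_add_eq (hα' : StrictMono α')
    (h : phiSS p n α k ⊆ phiSS p n α' k') {a b : Fin p} (hab : (b : ℕ) + k = a + k') :
    (α a : ℕ) ≤ α' b := by
  have := Fin.le_val_of_strictMono hα' b
  by_cases hcorner : k + α a ≤ a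
  · omega
  -- the top cell of the row of `phiSS p n α k` on which `α a` sits; it is a cell of `Q̃`
  -- because `k + α a > a`
  obtain ⟨q, hq₁, hq₂⟩ : ∃ q : Qt p n, q.val.1 = k + p - a ∧ q.val.2 = k + p - a + α a :=
    ⟨⟨(k + p - a, k + p - a + α a), by omega⟩, rfl, rfl⟩
  have hq : q ∈ phiSS p n α k := mem_phiSS_iff.mpr (Or.inr ⟨a, by omega, by omega⟩)
  obtain hq' | ⟨s, hs, hq'⟩ := mem_phiSS_iff.mp (h hq)
  · omega
  · obtain rfl : s = b := Fin.ext (by omega)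
    omega

theorem ssLe_of_phiSS_subset (hn : 0 < n) (hα : StrictMono α) (hα' : StrictMono α')
    (h : phiSS p n α k ⊆ phiSS p n α' k') : ssLe p n α k α' k' :=
  ⟨le_of_phiSS_subset hn hα h, fun _ _ => le_of_phiSS_subset_of_add_eq hα' h⟩

theorem ssLe_antisymm (h : ssLe p n α k α' k') (h' : ssLe p n α' k' α k) : α = α' ∧ k = k' := by
  have hk : k = k' := le_antisymm h.1 h'.1
  subst hk
  exact ⟨funext fun a => Fin.ext (le_antisymm (h.2 a a rfl) (h'.2 a a rfl)), rfl⟩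

end PhiSS

section FiniteIdeal

variable {p n : ℕ} {S : Set (Qt p n)}

def topRow (S : Set (Qt p n)) : ℕ := sSup ((fun q => q.val.1) '' S)

/-- `0` on an empty row, which lies below every cell since cells have `j ≥ p + 1`. -/
def rowMax (S : Set (Qt p n)) (i : ℕ) : ℕ := sSup ((fun q => q.val.2) '' {q ∈ S | q.val.1 = i})

theorem fst_le_topRow (hS : S.Finite) {q : Qt p n} (hq : q ∈ S) : q.val.1 ≤ topRow S :=
  le_csSup (hS.image _).bddAbove ⟨q, hq, rfl⟩

theorem exists_fst_eq_topRow (hS : S.Finite) (h : topRow S ≠ 0) :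
    ∃ q ∈ S, q.val.1 = topRow S := by
  refine Nat.sSup_mem (Set.nonempty_iff_ne_empty.mpr fun hemp => h ?_) (hS.image _).bddAbove
  rw [topRow, hemp, csSup_empty, bot_eq_zero]

theorem snd_le_rowMax (hS : S.Finite) {q : Qt p n} (hq : q ∈ S) : q.val.2 ≤ rowMax S q.val.1 :=
  le_csSup ((hS.subset (Set.sep_subset _ _)).image _).bddAbove ⟨q, ⟨hq, rfl⟩, rfl⟩

theorem exists_eq_rowMax (hS : S.Finite) {i : ℕ} (h : rowMax S i ≠ 0) :
    ∃ q ∈ S, q.val.1 = i ∧ q.val.2 = rowMax S i := by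
  have hne : ((fun q : Qt p n => q.val.2) '' {q ∈ S | q.val.1 = i}).Nonempty := by
    by_contra hemp
    exact h (by rw [rowMax, Set.not_nonempty_iff_eq_empty.mp hemp, csSup_empty, bot_eq_zero])
  obtain ⟨q, ⟨hq, hqi⟩, hqj⟩ :=
    Nat.sSup_mem hne ((hS.subset (Set.sep_subset _ _)).image _).bddAbove
  exact ⟨q, hq, hqi, hqj⟩

theorem rowMax_le (hS : S.Finite) (i : ℕ) : rowMax S i ≤ i + n - 1 := by
  by_cases h : rowMax S i = 0
  · omega
  obtain ⟨q, -, hqi, hqj⟩ := exists_eq_rowMax hS h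
  have := q.property
  omega

/-- The outer `max … p` gives an empty row `i ≤ p` the value `p - i`, which keeps that row empty
in `phiSS` since every cell has `j ≥ p + 1`. -/
def idealProfile (S : Set (Qt p n)) (s : ℕ) : ℕ :=
  max (rowMax S (max (topRow S) p - s)) p - (max (topRow S) p - s)

theorem idealProfile_lt (hpn : p < n) (hS : S.Finite) (s : ℕ) : idealProfile S s < n := by
  have := rowMax_le hS (max (topRow S) p - s)
  unfold idealProfile
  omega

variable (hS : S.Finite) (hI : IsOrderIdeal S)
include hS hI

theorem mem_iff_snd_le_rowMax {q : Qt p n} : q ∈ S ↔ q.val.2 ≤ rowMax S q.val.1 := by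
  refine ⟨snd_le_rowMax hS, fun hq => ?_⟩
  have := q.property
  obtain ⟨r, hr, hri, hrj⟩ := exists_eq_rowMax hS (i := q.val.1) (by omega)
  exact hI r hr q (Or.inl ⟨hri.ge, hrj ▸ hq⟩)

theorem mem_of_fst_add_le_topRow {q : Qt p n} (hq : q.val.1 + p ≤ topRow S) : q ∈ S := by
  have := q.property
  obtain ⟨r, hr, hrtop⟩ := exists_fst_eq_topRow hS (by omega)
  exact hI r hr q (Or.inr (Or.inl (by omega)))

theorem le_rowMax_of_le_topRow (hpn : p < n) {i : ℕ} (hi : 1 ≤ i) (htop : i ≤ topRow S) :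
    i ≤ rowMax S i := by
  obtain ⟨r, hr, hrtop⟩ := exists_fst_eq_topRow hS (by omega)
  have := r.property
  obtain ⟨q, hq₁, hq₂⟩ : ∃ q : Qt p n, q.val.1 = i ∧ q.val.2 = max i (p + 1) :=
    ⟨⟨(i, max i (p + 1)), by omega⟩, rfl, rfl⟩
  have := snd_le_rowMax hS (hI r hr q (Or.inl ⟨by omega, by omega⟩))
  rw [hq₁] at this
  omega

theorem snd_add_two_le_of_mem (hpn : p ≤ n) {q : Qt p n} (hq : q ∈ S) (h2 : 2 ≤ q.val.1)
    (htop : topRow S + 2 ≤ q.val.1 + p) : q.val.2 + 2 ≤ q.val.1 + n := by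
  have := q.property
  by_contra! hfull
  -- by (iii), `q_{i+p-1, i+p-1} ⪯ q_{i, i+n-1}`, a cell above the top row
  obtain ⟨r, hr₁, hr₂⟩ : ∃ r : Qt p n, r.val.1 = q.val.1 + p - 1 ∧ r.val.2 = q.val.1 + p - 1 :=
    ⟨⟨(q.val.1 + p - 1, q.val.1 + p - 1), by omega⟩, rfl, rfl⟩
  have := fst_le_topRow hS (hI q hq r (Or.inr (Or.inr (by omega))))
  omega

theorem rowMax_succ_le (hpn : p ≤ n) {i : ℕ} (hi : 1 ≤ i) (htop : topRow S + 1 ≤ i + p) :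
    rowMax S (i + 1) ≤ rowMax S i := by
  by_cases h : rowMax S (i + 1) = 0
  · omega
  obtain ⟨r, hr, hri, hrj⟩ := exists_eq_rowMax hS h
  have := r.property
  have := snd_add_two_le_of_mem hS hI hpn hr (by omega) (by omega)
  obtain ⟨q, hq₁, hq₂⟩ : ∃ q : Qt p n, q.val.1 = i ∧ q.val.2 = rowMax S (i + 1) :=
    ⟨⟨(i, rowMax S (i + 1)), by omega⟩, rfl, rfl⟩
  have := snd_le_rowMax hS (hI r hr q (Or.inl ⟨by omega, by omega⟩))
  rw [hq₁] at this
  omega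

theorem le_max_rowMax (hpn : p < n) {i : ℕ} (hi : 1 ≤ i) (htop : i ≤ max (topRow S) p) :
    i ≤ max (rowMax S i) p := by
  by_cases h : i ≤ topRow S
  · exact (le_rowMax_of_le_topRow hS hI hpn hi h).trans (le_max_left _ _)
  · exact le_max_of_le_right (by omega)

theorem idealProfile_lt_succ (hpn : p < n) {s : ℕ} (hs : s + 1 < p) :
    idealProfile S s < idealProfile S (s + 1) := by
  set i := max (topRow S) p - (s + 1) with hi
  have hsucc : max (topRow S) p - s = i + 1 := by omega
  have hmono := rowMax_succ_le hS hI hpn.le (i := i) (by omega) (by omega)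
  have hrow := le_max_rowMax hS hI hpn (i := i + 1) (by omega) (by omega)
  unfold idealProfile
  rw [hsucc, ← hi]
  omega

theorem strictMonoOn_idealProfile (hpn : p < n) :
    StrictMonoOn (idealProfile S) (Set.Iic (p - 1)) :=
  strictMonoOn_Iic_of_lt_succ fun s hs => by
    rw [Order.succ_eq_add_one]
    exact idealProfile_lt_succ hS hI hpn (by omega)

theorem exists_phiSS_eq (hpn : p < n) :
    ∃ (α : Fin p → Fin n) (k : ℕ), StrictMono α ∧ phiSS p n α k = S := by
  refine ⟨fun s => ⟨idealProfile S s, idealProfile_lt hpn hS s⟩, topRow S - p,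
    fun s s' hss' => strictMonoOn_idealProfile hS hI hpn (by simp; omega) (by simp; omega) hss',
    ?_⟩
  ext q
  have := q.property
  have hmem := mem_iff_snd_le_rowMax hS hI (q := q)
  rw [mem_phiSS_iff, hmem]
  constructor
  · rintro (hk | ⟨s, hs, hq⟩)
    · exact hmem.mp (mem_of_fst_add_le_topRow hS hI (by omega))
    · have hrow := le_max_rowMax hS hI hpn (i := q.val.1) (by omega) (by omega)
      change q.val.2 ≤ q.val.1 + idealProfile S s at hq
      rw [idealProfile, show max (topRow S) p - s = q.val.1 by omega] at hq
      omega
  · intro hq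
    have := fst_le_topRow hS (hmem.mpr hq)
    refine or_iff_not_imp_left.mpr fun hk =>
      ⟨⟨topRow S - p + p - q.val.1, by omega⟩, by simp only; omega, ?_⟩
    change q.val.2 ≤ q.val.1 + idealProfile S (topRow S - p + p - q.val.1)
    rw [idealProfile, show max (topRow S) p - (topRow S - p + p - q.val.1) = q.val.1 by omega]
    omega

end FiniteIdeal

theorem statement13_general (p n : ℕ) (hpn : p < n) :
    (∀ (α : Fin p → Fin n) (k : ℕ), StrictMono α →
        (phiSS p n α k).Finite ∧
          (∀ a ∈ phiSS p n α k, ∀ b, qleT p n b a → b ∈ phiSS p n α k)) ∧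
      (∀ (α α' : Fin p → Fin n) (k k' : ℕ), StrictMono α → StrictMono α' →
        phiSS p n α k = phiSS p n α' k' → α = α' ∧ k = k') ∧
      (∀ S : Set (Qt p n), S.Finite → (∀ a ∈ S, ∀ b, qleT p n b a → b ∈ S) →
        ∃ (α : Fin p → Fin n) (k : ℕ), StrictMono α ∧ phiSS p n α k = S) ∧
      (∀ (α α' : Fin p → Fin n) (k k' : ℕ), StrictMono α → StrictMono α' →
        (ssLe p n α k α' k' ↔ phiSS p n α k ⊆ phiSS p n α' k')) := by
  have hn : 0 < n := Nat.zero_lt_of_lt hpn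
  refine ⟨fun α k hα => ⟨finite_phiSS, isOrderIdeal_phiSS hα⟩, ?_,
    fun S hS hI => exists_phiSS_eq hS hI hpn,
    fun α α' k k' hα hα' => ⟨phiSS_subset_of_ssLe, ssLe_of_phiSS_subset hn hα hα'⟩⟩
  intro α α' k k' hα hα' h
  exact ssLe_antisymm (ssLe_of_phiSS_subset hn hα hα' h.subset)
    (ssLe_of_phiSS_subset hn hα' hα h.symm.subset)

/-- The map `φ_ss` is an isomorphism of posets from `(Ĩ_ss, ⪯_ss)`
onto the set `𝒥(Q̃)` of finite order ideals of `(Q̃,≺)` ordered by inclusion. -/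
theorem statement13 (p n : ℕ) (hp : 1 ≤ p) (hpn : p < n) :
    (∀ (α : Fin p → Fin n) (k : ℕ), StrictMono α →
        (phiSS p n α k).Finite ∧
          (∀ a ∈ phiSS p n α k, ∀ b, qleT p n b a → b ∈ phiSS p n α k)) ∧
      (∀ (α α' : Fin p → Fin n) (k k' : ℕ), StrictMono α → StrictMono α' →
        phiSS p n α k = phiSS p n α' k' → α = α' ∧ k = k') ∧
      (∀ S : Set (Qt p n), S.Finite → (∀ a ∈ S, ∀ b, qleT p n b a → b ∈ S) →
        ∃ (α : Fin p → Fin n) (k : ℕ), StrictMono α ∧ phiSS p n α k = S) ∧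
      (∀ (α α' : Fin p → Fin n) (k k' : ℕ), StrictMono α → StrictMono α' →
        (ssLe p n α k α' k' ↔ phiSS p n α k ⊆ phiSS p n α' k')) :=
  statement13_general p n hpn
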